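/- Let R = (G,Φ,Φ⁺) be a signed groupoid set, a an object, X ⊆ ₐG, and consider the object (a,X) of the generalized Brink–Howlett groupoid G^□. Then: (a) every positive imaginary root of R at a is imaginary for R^□ at (a,X); (b) for every x ∈ X, Φ_x is contained in the set of positive imaginary roots of R^□ at (a,X); (c) if moreover R is faithful and antipodal and X = {x} is a singleton, then the positive imaginary roots of R^□ at (a,{x}) are exactly Φ_x ⊔ (positive imaginary roots of R at a), and the component of R^□ containing (a,{x}) is antipodal. -/

import Mathlib

open CategoryTheory

universe u v

/-- A signed groupoid set: a groupoid `G` acting on a family of definitely involuted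
sets `R a` (`a ∈ Ob G`), with involution `neg`, positive parts `pos a`, and the action
commuting with the involution. -/
structure SGS (G : Type u) [Groupoid G] (R : G → Type v) where
  neg : ∀ {a : G}, R a → R a
  pos : ∀ a : G, Set (R a)
  act : ∀ {a b : G}, (b ⟶ a) → R b → R a
  neg_neg : ∀ {a : G} (x : R a), neg (neg x) = x
  pos_iff : ∀ {a : G} (x : R a), x ∈ pos a ↔ neg x ∉ pos a
  act_id : ∀ {a : G} (x : R a), act (𝟙 a) x = x
  act_comp : ∀ {a b c : G} (g : c ⟶ b) (f : b ⟶ a) (x : R c),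
      act f (act g x) = act (g ≫ f) x
  act_neg : ∀ {a b : G} (f : b ⟶ a) (x : R b), act f (neg x) = neg (act f x)

/-- The morphisms of `G` with codomain `a`. -/
abbrev SHoms (G : Type u) [Groupoid G] (a : G) : Type _ := Σ b : G, (b ⟶ a)

namespace SGS

variable {G : Type u} [Groupoid G] {R : G → Type v} (S : SGS G R)

/-- The inversion set of a morphism `f : b ⟶ a`: positive roots at `a` sent to
negative roots at `b` by `f⁻¹`. -/
def Phi {a b : G} (f : b ⟶ a) : Set (R a) :=
  {α | α ∈ S.pos a ∧ S.act (Groupoid.inv f) α ∉ S.pos b}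

/-- The inversion set of an element of `SHoms G a`. -/
def PhiS {a : G} (g : SHoms G a) : Set (R a) := S.Phi g.2

/-- `S` is faithful if only identity morphisms have empty inversion set. -/
def Faithful : Prop :=
  ∀ ⦃a b : G⦄ (f : b ⟶ a), S.Phi f = ∅ → ∃ h : b = a, f = eqToHom h

/-- `j` is an upper bound of `F` in the weak order at `a`. -/
def IsUB {a : G} (F : Set (SHoms G a)) (j : SHoms G a) : Prop :=
  ∀ g ∈ F, S.PhiS g ⊆ S.PhiS j

/-- `j` is a least upper bound of `F` in the weak order at `a`. -/
def IsLUBw {a : G} (F : Set (SHoms G a)) (j : SHoms G a) : Prop :=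
  S.IsUB F j ∧ ∀ k : SHoms G a, S.IsUB F k → S.PhiS j ⊆ S.PhiS k

/-- `S` is complete: the weak order at every object is a complete lattice
(equivalently, every family of morphisms with a common codomain has a join). -/
def Complete : Prop := ∀ (a : G) (F : Set (SHoms G a)), ∃ j : SHoms G a, S.IsLUBw F j

/-- `S` is finite: finitely many objects, morphisms and roots. -/
def FiniteSGS (_S : SGS G R) : Prop :=
  Finite G ∧ (∀ a b : G, Finite (a ⟶ b)) ∧ ∀ a : G, Finite (R a)

/-- A square `(x, w, y, z)`: a commuting square `xw = yz` with `x(Φ_w) = Φ_y`. -/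
def Square {a b c d : G} (x : b ⟶ d) (w : a ⟶ b) (y : c ⟶ d) (z : a ⟶ c) : Prop :=
  w ≫ x = z ≫ y ∧ S.act x '' S.Phi w = S.Phi y

/-- The positive real roots at `a`: the union of all inversion sets at `a`. -/
def posRe (a : G) : Set (R a) := ⋃ g : SHoms G a, S.PhiS g

/-- An atomic morphism: an atom of the weak order at its codomain. -/
def Atomic {a : G} (g : SHoms G a) : Prop :=
  S.PhiS g ≠ ∅ ∧ ∀ h : SHoms G a, S.PhiS h ⊆ S.PhiS g →
    S.PhiS h = ∅ ∨ S.PhiS h = S.PhiS g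

/-- A simple morphism: one whose inversion set is a singleton. -/
def Simple {a b : G} (f : b ⟶ a) : Prop := ∃ α : R a, S.Phi f = {α}

/-- Interval finiteness: every interval `[1ₐ, g]` of a weak order is finite. -/
def IntervalFinite : Prop :=
  ∀ (a : G) (g : SHoms G a), {h : SHoms G a | S.PhiS h ⊆ S.PhiS g}.Finite

/-- Preprincipal: interval finite, and the inversion set of an atomic morphism is
contained in, or disjoint from, any other inversion set at the same object. -/
def Preprincipal : Prop :=
  S.IntervalFinite ∧ ∀ (a : G) (s g : SHoms G a), S.Atomic s →
    S.PhiS s ⊆ S.PhiS g ∨ S.PhiS s ∩ S.PhiS g = ∅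

/-- Antipodal: the weak order at each object has a maximum element. -/
def Antipodal : Prop :=
  ∀ a : G, ∃ ω : SHoms G a, ∀ g : SHoms G a, S.PhiS g ⊆ S.PhiS ω

end SGS

namespace SGS

variable {G : Type u} [Groupoid G] {R : G → Type v} (S : SGS G R)

/-- `f : a ⟶ b` underlies a morphism `(a, X) ⟶ (b, Y)` of the generalized
Brink–Howlett groupoid `G^□` iff there is a bijection `σ : X → Y` with
`f(Φ_g) = Φ_{σ g}` for all `g ∈ X`. -/
def IsBHHom {a b : G} (X : Set (SHoms G a)) (Y : Set (SHoms G b)) (f : a ⟶ b) :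
    Prop :=
  ∃ σ : X → Y, Function.Bijective σ ∧
    ∀ g : X, S.act f '' S.PhiS g.1 = S.PhiS (σ g).1

/-- A positive root at `a` which is imaginary for `R` (lies in no inversion set). -/
def Imag {a : G} (α : R a) : Prop :=
  α ∈ S.pos a ∧ ∀ (b : G) (g : b ⟶ a), α ∉ S.Phi g

/-- A positive root at `a` which is imaginary for `R^□` at the object `(a, X)`:
it lies in no inversion set of a morphism of `G^□` with codomain `(a, X)`. -/
def BHImag {a : G} (X : Set (SHoms G a)) (α : R a) : Prop :=
  α ∈ S.pos a ∧ ∀ (b : G) (Y : Set (SHoms G b)) (f : b ⟶ a),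
    S.IsBHHom Y X f → α ∉ S.Phi f

end SGS

/-!
In an antipodal `R`, composing `y : b' ⟶ b` with the maximum `ω` at `b'` gives
`Φ_{yω} = Φ⁺_re \ Φ_y`. Applied twice, this shows that `yω` maps `Φ_{(yω)⁻¹ω'}` (with `ω'`
maximal at `b`) onto `Φ_y`, so `yω` underlies a morphism of `G^□` into `(b, {y})`, and no real
root outside `Φ_y` is imaginary for `R^□` there. Conversely, a morphism of `G^□` into `(b, Y)`
maps an inversion set, a set of positive roots, onto `Φ_y` for each `y ∈ Y`, so it inverts no
root of `Φ_y`. Its inversion set therefore lies in `Φ⁺_re \ Φ_y = Φ_{yω}`, and `yω` is the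
maximum of the weak order at `(b, {y})`.
-/

namespace SGS

variable {G : Type u} [Groupoid G] {R : G → Type v} (S : SGS G R)

lemma act_act_inv {a b : G} (f : b ⟶ a) (α : R a) :
    S.act f (S.act (Groupoid.inv f) α) = α := by
  rw [S.act_comp, Groupoid.inv_comp, S.act_id]

lemma act_inv_act {a b : G} (f : b ⟶ a) (β : R b) :
    S.act (Groupoid.inv f) (S.act f β) = β := by
  rw [S.act_comp, Groupoid.comp_inv, S.act_id]

lemma act_inv_inv {a b : G} (f : b ⟶ a) (β : R b) :
    S.act (Groupoid.inv (Groupoid.inv f)) β = S.act f β := by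
  simp only [Groupoid.inv_eq_inv, IsIso.inv_inv]

lemma act_inv_comp {a b c : G} (k : c ⟶ b) (f : b ⟶ a) (α : R a) :
    S.act (Groupoid.inv (k ≫ f)) α = S.act (Groupoid.inv k) (S.act (Groupoid.inv f) α) := by
  rw [S.act_comp, Groupoid.inv_eq_inv, Groupoid.inv_eq_inv, Groupoid.inv_eq_inv, IsIso.inv_comp]

lemma neg_mem_pos {a : G} {α : R a} (h : α ∉ S.pos a) : S.neg α ∈ S.pos a := by
  rwa [S.pos_iff, S.neg_neg]

lemma mem_posRe {a b : G} {g : b ⟶ a} {α : R a} (h : α ∈ S.Phi g) : α ∈ S.posRe a :=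
  Set.mem_iUnion.2 ⟨⟨b, g⟩, h⟩

lemma mem_pos_of_mem_posRe {a : G} {α : R a} (h : α ∈ S.posRe a) : α ∈ S.pos a := by
  obtain ⟨g, hg⟩ := Set.mem_iUnion.1 h
  exact hg.1

lemma act_inv_mem_pos {a b : G} {f : b ⟶ a} {α : R a} (hpos : α ∈ S.pos a)
    (h : α ∉ S.Phi f) : S.act (Groupoid.inv f) α ∈ S.pos b :=
  by_contra fun hc => h ⟨hpos, hc⟩

lemma act_mem_posRe {a b : G} {f : b ⟶ a} {β : R b} (hre : β ∈ S.posRe b)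
    (hpos : S.act f β ∈ S.pos a) : S.act f β ∈ S.posRe a := by
  obtain ⟨g, hg⟩ := Set.mem_iUnion.1 hre
  refine S.mem_posRe (g := g.2 ≫ f) ⟨hpos, ?_⟩
  rw [S.act_inv_comp, S.act_inv_act]
  exact hg.2

lemma disjoint_phi_image_pos {a b : G} (f : b ⟶ a) :
    Disjoint (S.Phi f) (S.act f '' S.pos b) := by
  rw [Set.disjoint_right]
  rintro _ ⟨β, hβ, rfl⟩ hmem
  exact hmem.2 (by rwa [S.act_inv_act])

lemma phi_comp_of_phi_eq_posRe {a b c : G} (f : b ⟶ a) {ω : c ⟶ b}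
    (hω : S.Phi ω = S.posRe b) : S.Phi (ω ≫ f) = S.posRe a \ S.Phi f := by
  ext α
  constructor
  · intro h
    refine ⟨S.mem_posRe h, fun hf => h.2 ?_⟩
    -- `-f⁻¹α` is inverted by `f⁻¹`, hence real, hence inverted by `ω`
    have hneg : S.neg (S.act (Groupoid.inv f) α) ∈ S.Phi (Groupoid.inv f) := by
      refine ⟨S.neg_mem_pos hf.2, ?_⟩
      rw [S.act_neg, S.act_inv_inv, S.act_act_inv, ← S.pos_iff]
      exact hf.1
    have hnegω := (hω ▸ S.mem_posRe hneg : _ ∈ S.Phi ω).2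
    rw [S.act_neg, ← S.pos_iff] at hnegω
    rwa [S.act_inv_comp]
  · rintro ⟨hre, hnf⟩
    have hγ := S.act_inv_mem_pos (S.mem_pos_of_mem_posRe hre) hnf
    have hγω : S.act (Groupoid.inv f) α ∈ S.Phi ω := hω ▸ S.act_mem_posRe hre hγ
    exact ⟨S.mem_pos_of_mem_posRe hre, by rw [S.act_inv_comp]; exact hγω.2⟩

lemma image_posRe_diff_phi_inv {a b : G} (f : b ⟶ a) :
    S.act f '' (S.posRe b \ S.Phi (Groupoid.inv f)) = S.posRe a \ S.Phi f := by
  rw [Set.image_eq_preimage_of_inverse (S.act_inv_act f) (S.act_act_inv f)]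
  ext α
  simp only [Set.mem_preimage, Set.mem_sdiff, Phi, Set.mem_ofPred_eq, act_inv_inv, act_act_inv,
    not_and, not_not]
  constructor
  · rintro ⟨hre, hpos⟩
    have hα := hpos (S.mem_pos_of_mem_posRe hre)
    refine ⟨?_, fun _ => S.mem_pos_of_mem_posRe hre⟩
    have := S.act_mem_posRe (f := f) hre (by rwa [S.act_act_inv])
    rwa [S.act_act_inv] at this
  · rintro ⟨hre, hpos⟩
    have hγ := hpos (S.mem_pos_of_mem_posRe hre)
    exact ⟨S.act_mem_posRe hre hγ, fun _ => S.mem_pos_of_mem_posRe hre⟩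

lemma exists_phi_eq_posRe (hA : S.Antipodal) (a : G) :
    ∃ (b : G) (ω : b ⟶ a), S.Phi ω = S.posRe a := by
  obtain ⟨ω, hω⟩ := hA a
  exact ⟨ω.1, ω.2, subset_antisymm (fun _ => S.mem_posRe) (Set.iUnion_subset hω)⟩

lemma exists_phi_eq_posRe_diff (hA : S.Antipodal) {a b : G} (y : b ⟶ a) :
    ∃ (c : G) (m : c ⟶ a) (d : G) (z : d ⟶ c),
      S.act m '' S.Phi z = S.Phi y ∧ S.Phi m = S.posRe a \ S.Phi y := by
  obtain ⟨c, ω, hω⟩ := S.exists_phi_eq_posRe hA b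
  obtain ⟨d, ω', hω'⟩ := S.exists_phi_eq_posRe hA a
  have hm := S.phi_comp_of_phi_eq_posRe y hω
  refine ⟨c, ω ≫ y, d, ω' ≫ Groupoid.inv (ω ≫ y), ?_, hm⟩
  rw [S.phi_comp_of_phi_eq_posRe _ hω', S.image_posRe_diff_phi_inv, hm,
    Set.sdiff_sdiff_cancel_left fun _ => S.mem_posRe]

lemma isBHHom_singleton {a b c : G} {m : b ⟶ a} {z : c ⟶ b} {y : SHoms G a}
    (h : S.act m '' S.Phi z = S.Phi y.2) : S.IsBHHom {⟨c, z⟩} {y} m := by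
  refine ⟨fun _ => ⟨y, rfl⟩, ⟨fun p q _ => Subsingleton.elim p q,
    fun _ => ⟨⟨_, rfl⟩, Subsingleton.elim _ _⟩⟩, ?_⟩
  rintro ⟨_, rfl⟩
  exact h

lemma eq_singleton_of_isBHHom_singleton {a b : G} {Y : Set (SHoms G b)} {x : SHoms G a}
    {f : b ⟶ a} (hf : S.IsBHHom Y {x} f) : ∃ y, Y = {y} := by
  obtain ⟨σ, hσ, -⟩ := hf
  obtain ⟨y, -⟩ := hσ.2 ⟨x, rfl⟩
  have := hσ.1.subsingleton
  exact Set.exists_eq_singleton_iff_nonempty_subsingleton.2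
    ⟨⟨y.1, y.2⟩, (Set.subsingleton_coe Y).1 inferInstance⟩

lemma disjoint_phi_phiS_of_isBHHom {a b : G} {X : Set (SHoms G a)} {Y : Set (SHoms G b)}
    {f : b ⟶ a} (hf : S.IsBHHom Y X f) {x : SHoms G a} (hx : x ∈ X) :
    Disjoint (S.Phi f) (S.PhiS x) := by
  obtain ⟨σ, hσ, himage⟩ := hf
  obtain ⟨g, hg⟩ := hσ.2 ⟨x, hx⟩
  rw [show S.PhiS x = _ from hg ▸ (himage g).symm]
  exact (S.disjoint_phi_image_pos f).mono_right (Set.image_mono fun _ h => h.1)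

lemma bhImag_of_imag {a : G} (X : Set (SHoms G a)) {α : R a} (h : S.Imag α) :
    S.BHImag X α :=
  ⟨h.1, fun b _ f _ => h.2 b f⟩

lemma phiS_subset_bhImag {a : G} {X : Set (SHoms G a)} {x : SHoms G a} (hx : x ∈ X) :
    S.PhiS x ⊆ {α | S.BHImag X α} :=
  fun _ hα => ⟨hα.1, fun _ _ _ hf hαf => Set.disjoint_left.1
    (S.disjoint_phi_phiS_of_isBHHom hf hx) hαf hα⟩

lemma disjoint_phiS_imag {a : G} (x : SHoms G a) : Disjoint (S.PhiS x) {α | S.Imag α} :=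
  Set.disjoint_left.2 fun _ hαx hα => hα.2 x.1 x.2 hαx

lemma bhImag_singleton_iff (hA : S.Antipodal) {a : G} (x : SHoms G a) {α : R a} :
    S.BHImag {x} α ↔ α ∈ S.PhiS x ∨ S.Imag α := by
  refine ⟨fun h => or_iff_not_imp_left.2 fun hx => ⟨h.1, fun b g hg => ?_⟩, ?_⟩
  · obtain ⟨c, m, d, z, hz, hm⟩ := S.exists_phi_eq_posRe_diff hA x.2
    exact h.2 c {⟨d, z⟩} m (S.isBHHom_singleton hz) (hm ▸ ⟨S.mem_posRe hg, hx⟩)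
  · rintro (h | h)
    · exact S.phiS_subset_bhImag (Set.mem_singleton x) h
    · exact S.bhImag_of_imag _ h

lemma exists_max_isBHHom_singleton (hA : S.Antipodal) {b : G} (y : SHoms G b) :
    ∃ (c : G) (Z : Set (SHoms G c)) (m : c ⟶ b), S.IsBHHom Z {y} m ∧
      ∀ (c' : G) (Z' : Set (SHoms G c')) (h : c' ⟶ b),
        S.IsBHHom Z' {y} h → S.Phi h ⊆ S.Phi m := by
  obtain ⟨c, m, d, z, hz, hm⟩ := S.exists_phi_eq_posRe_diff hA y.2
  refine ⟨c, {⟨d, z⟩}, m, S.isBHHom_singleton hz, fun _ _ h hh α hα => hm ▸ ?_⟩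
  exact ⟨S.mem_posRe hα, Set.disjoint_left.1 (S.disjoint_phi_phiS_of_isBHHom hh rfl) hα⟩

end SGS

/-- (a) every positive imaginary root of `R` at `a` is imaginary for
`R^□` at `(a, X)`; (b) for `x ∈ X`, `Φ_x` consists of positive imaginary roots of
`R^□` at `(a, X)`; (c) if `R` is faithful and antipodal and `X = {x}`, the positive
imaginary roots of `R^□` at `(a, {x})` are exactly `Φ_x ⊔ (imaginary roots at a)`,
and the component of `R^□` containing `(a, {x})` is antipodal. -/
theorem stmt_17 {G : Type u} [Groupoid G] {R : G → Type v} (S : SGS G R)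
    (a : G) (X : Set (SHoms G a)) :
    (∀ α : R a, S.Imag α → S.BHImag X α) ∧
    (∀ x ∈ X, S.PhiS x ⊆ {α : R a | S.BHImag X α}) ∧
    (S.Faithful → S.Antipodal → ∀ x : SHoms G a,
      ({α : R a | S.BHImag {x} α} = S.PhiS x ∪ {α : R a | S.Imag α} ∧
        Disjoint (S.PhiS x) {α : R a | S.Imag α}) ∧
      (∀ (b : G) (Y : Set (SHoms G b)) (f : b ⟶ a), S.IsBHHom Y {x} f →
        ∃ (c : G) (Z : Set (SHoms G c)) (m : c ⟶ b), S.IsBHHom Z Y m ∧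
          ∀ (c' : G) (Z' : Set (SHoms G c')) (h : c' ⟶ b),
            S.IsBHHom Z' Y h → S.Phi h ⊆ S.Phi m)) := by
  refine ⟨fun _ => S.bhImag_of_imag X, fun _ => S.phiS_subset_bhImag,
    fun _ hA x => ⟨⟨Set.ext fun _ => S.bhImag_singleton_iff hA x, S.disjoint_phiS_imag x⟩, ?_⟩⟩
  intro b Y f hf
  obtain ⟨y, rfl⟩ := S.eq_singleton_of_isBHHom_singleton hf
  exact S.exists_max_isBHHom_singleton hA y
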